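/- Let n ≥ 1 be an integer, let ζ_{p^n} be a primitive p^n-th root of unity in a finite extension K of ℚ_p with valuation v_p normalized by v_p(p) = 1, and set x = ζ_{p^n} − 1. Then v_p(π_i(x)) = p^i·v_p(x) for all 0 ≤ i < n, and π_i(x) = 0 for all i ≥ n, where π_i(x) denotes the convergent evaluation of π_i(T) at T = x. -/

import Mathlib

/-!
Write `x = ζ - 1` and `y_i = π_i(x)`. Evaluation at `x` is a ring homomorphism on `ℤ_p⟦T⟧`
compatible with substitution, so `E(y_i) = ζ ^ p ^ i`. Since `E(T) ≡ 1 + T mod T²`, this gives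
`ζ ^ p ^ i - 1 = y_i + O(‖y_i‖²)`, hence `‖y_i‖ = ‖ζ ^ p ^ i - 1‖` in the nonarchimedean
field `K`, which is `0` for `i ≥ n`. For `i < n`, `ζ ^ p ^ i` is a primitive `p ^ (n - i)`-th
root of unity, and evaluating cyclotomic polynomials at `1` gives
`‖ξ - 1‖ ^ totient (p ^ m) = ‖p‖` for every primitive `p ^ m`-th root `ξ`, so
`‖ζ ^ p ^ i - 1‖ = ‖ζ - 1‖ ^ p ^ i`. As `v` orders `K` like the norm and is multiplicative,
this is the claim.
-/

open PowerSeries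

noncomputable section

open scoped Classical in
/-- The series ℓ(T) = ∑_{i≥0} T^{p^i}/p^i over ℚ. -/
def lseries (p : ℕ) : PowerSeries ℚ :=
  PowerSeries.mk fun n => if ∃ i : ℕ, n = p ^ i then (n : ℚ)⁻¹ else 0

/-- Substitution `f(g)` of a power series `g` with zero constant coefficient
into a power series `f`. -/
def psComp {R : Type*} [CommSemiring R] (g f : PowerSeries R) : PowerSeries R :=
  PowerSeries.mk fun n =>
    ∑ k ∈ Finset.range (n + 1), PowerSeries.coeff k f * PowerSeries.coeff n (g ^ k)

/-- The Artin–Hasse exponential E(T) = exp(∑ T^{p^i}/p^i) over ℚ. -/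
def artinHasse (p : ℕ) : PowerSeries ℚ := psComp (lseries p) (PowerSeries.exp ℚ)

variable (p : ℕ) [Fact p.Prime]

/-- The property that `Ep` is the Artin–Hasse exponential regarded as a power
series with coefficients in `ℤ_p` (its coefficients lie in `ℤ_(p) ⊆ ℤ_p`). -/
def IsArtinHasseZp (Ep : PowerSeries ℤ_[p]) : Prop :=
  PowerSeries.map (PadicInt.Coe.ringHom) Ep
    = PowerSeries.map (Rat.castHom ℚ_[p]) (artinHasse p)

/-- The property that `πfam i` is the power series `π_i(T) ∈ T·ℤ_p[[T]]`
with `E(π_i(T)) = (1+T)^{p^i}`. -/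
def IsPiFamily (Ep : PowerSeries ℤ_[p]) (πfam : ℕ → PowerSeries ℤ_[p]) : Prop :=
  ∀ i : ℕ, PowerSeries.constantCoeff (πfam i) = 0
    ∧ psComp (πfam i) Ep = (1 + X) ^ p ^ i

lemma IsUltrametricDist.norm_eq_of_norm_sub_le_sq {E : Type*} [NormedAddCommGroup E]
    [IsUltrametricDist E] {w y : E} (hy : ‖y‖ < 1) (h : ‖w - y‖ ≤ ‖y‖ ^ 2) : ‖w‖ = ‖y‖ := by
  rcases eq_or_ne y 0 with rfl | hy0
  · simpa using h
  · have hlt : ‖w - y‖ < ‖y‖ := h.trans_lt (by nlinarith [norm_pos_iff.mpr hy0])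
    rw [← add_sub_cancel y w, norm_add_eq_max_of_norm_ne_norm hlt.ne', max_eq_left hlt.le]

section Evaluation

variable {R K : Type*} [CommRing R] [NormedField K]

def psEval (φ : R →+* K) (x : K) (f : R⟦X⟧) : K :=
  ∑' j : ℕ, φ (coeff j f) * x ^ j

variable {φ : R →+* K} {x : K}

lemma norm_coeff_mul_pow_le (hφ : ∀ a, ‖φ a‖ ≤ 1) (f : R⟦X⟧) (j : ℕ) :
    ‖φ (coeff j f) * x ^ j‖ ≤ ‖x‖ ^ j := by
  rw [norm_mul, norm_pow]
  exact mul_le_of_le_one_left (by positivity) (hφ _)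

lemma summable_norm_coeff_mul_pow (hφ : ∀ a, ‖φ a‖ ≤ 1) (hx : ‖x‖ < 1) (f : R⟦X⟧) :
    Summable fun j : ℕ => ‖φ (coeff j f) * x ^ j‖ :=
  .of_nonneg_of_le (fun _ => norm_nonneg _) (norm_coeff_mul_pow_le hφ f)
    (summable_geometric_of_lt_one (norm_nonneg x) hx)

lemma coeff_pow_eq_zero_of_lt {g : R⟦X⟧} (hg : constantCoeff g = 0) {k n : ℕ} (h : n < k) :
    coeff n (g ^ k) = 0 :=
  X_pow_dvd_iff.mp (pow_dvd_pow_of_dvd (X_dvd_iff.mpr hg) k) n h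

lemma psEval_X : psEval φ x X = x := by
  rw [psEval, tsum_eq_single 1 fun j hj => by simp [coeff_X, hj]]
  simp

lemma norm_psEval_le_one [IsUltrametricDist K] (hφ : ∀ a, ‖φ a‖ ≤ 1) (hx : ‖x‖ ≤ 1)
    (f : R⟦X⟧) : ‖psEval φ x f‖ ≤ 1 :=
  IsUltrametricDist.norm_tsum_le_of_forall_le_of_nonneg zero_le_one fun j =>
    (norm_coeff_mul_pow_le hφ f j).trans (pow_le_one₀ (norm_nonneg x) hx)

variable [CompleteSpace K]

lemma summable_coeff_mul_pow (hφ : ∀ a, ‖φ a‖ ≤ 1) (hx : ‖x‖ < 1) (f : R⟦X⟧) :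
    Summable fun j : ℕ => φ (coeff j f) * x ^ j :=
  (summable_norm_coeff_mul_pow hφ hx f).of_norm

def psEvalRingHom (hφ : ∀ a, ‖φ a‖ ≤ 1) (hx : ‖x‖ < 1) : R⟦X⟧ →+* K where
  toFun := psEval φ x
  map_zero' := by simp [psEval]
  map_one' := by
    rw [psEval, tsum_eq_single 0 fun j hj => by simp [coeff_one, hj]]
    simp
  map_add' f g := by
    simp only [psEval, map_add, add_mul]
    exact (summable_coeff_mul_pow hφ hx f).tsum_add (summable_coeff_mul_pow hφ hx g)
  map_mul' f g := by
    rw [psEval, psEval, psEval, tsum_mul_tsum_eq_tsum_sum_antidiagonal_of_summable_norm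
      (summable_norm_coeff_mul_pow hφ hx f) (summable_norm_coeff_mul_pow hφ hx g)]
    refine tsum_congr fun n => ?_
    rw [coeff_mul, map_sum, Finset.sum_mul]
    refine Finset.sum_congr rfl fun kl hkl => ?_
    rw [Finset.HasAntidiagonal.mem_antidiagonal] at hkl
    rw [map_mul, ← hkl, pow_add]
    ring

lemma psEvalRingHom_apply (hφ : ∀ a, ‖φ a‖ ≤ 1) (hx : ‖x‖ < 1) (f : R⟦X⟧) :
    psEvalRingHom hφ hx f = psEval φ x f := rfl

lemma norm_psEval_le_pow [IsUltrametricDist K] (hφ : ∀ a, ‖φ a‖ ≤ 1) (hx : ‖x‖ < 1)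
    {f : R⟦X⟧} {m : ℕ} (hf : X ^ m ∣ f) : ‖psEval φ x f‖ ≤ ‖x‖ ^ m := by
  obtain ⟨g, rfl⟩ := hf
  rw [← psEvalRingHom_apply hφ hx, map_mul, map_pow, psEvalRingHom_apply, psEval_X,
    norm_mul, norm_pow, psEvalRingHom_apply]
  exact mul_le_of_le_one_right (by positivity) (norm_psEval_le_one hφ hx.le g)

lemma summable_psComp_terms (hφ : ∀ a, ‖φ a‖ ≤ 1) (hx : ‖x‖ < 1) (f : R⟦X⟧) {g : R⟦X⟧}
    (hg : constantCoeff g = 0) :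
    Summable fun kn : ℕ × ℕ => φ (coeff kn.1 f) * (φ (coeff kn.2 (g ^ kn.1)) * x ^ kn.2) := by
  -- The `(k, n)` term vanishes unless `k ≤ n`, and then `‖x‖ ^ n ≤ s ^ k * s ^ n` for `s = √‖x‖`.
  set s := √‖x‖
  have hs0 : 0 ≤ s := Real.sqrt_nonneg _
  have hs1 : s < 1 := (Real.sqrt_lt' one_pos).mpr (by simpa using hx)
  have hgeom := summable_geometric_of_lt_one hs0 hs1
  refine .of_norm_bounded (hgeom.mul_of_nonneg hgeom (fun _ => by positivity)
    (fun _ => by positivity)) fun ⟨k, n⟩ => ?_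
  rcases lt_or_ge n k with h | h
  · simp only [coeff_pow_eq_zero_of_lt hg h, map_zero, zero_mul, mul_zero, norm_zero]
    positivity
  · calc ‖φ (coeff k f) * (φ (coeff n (g ^ k)) * x ^ n)‖
        = ‖φ (coeff k f)‖ * ‖φ (coeff n (g ^ k)) * x ^ n‖ := norm_mul _ _
      _ ≤ 1 * ‖x‖ ^ n :=
        mul_le_mul (hφ _) (norm_coeff_mul_pow_le hφ _ n) (norm_nonneg _) zero_le_one
      _ = s ^ n * s ^ n := by rw [one_mul, ← mul_pow, Real.mul_self_sqrt (norm_nonneg x)]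
      _ ≤ s ^ k * s ^ n :=
        mul_le_mul_of_nonneg_right (pow_le_pow_of_le_one hs0 hs1.le h) (pow_nonneg hs0 n)

lemma psEval_psComp (hφ : ∀ a, ‖φ a‖ ≤ 1) (hx : ‖x‖ < 1) (f : R⟦X⟧) {g : R⟦X⟧}
    (hg : constantCoeff g = 0) :
    psEval φ x (psComp g f) = psEval φ (psEval φ x g) f := by
  calc psEval φ x (psComp g f)
      = ∑' (n : ℕ) (k : ℕ), φ (coeff k f) * (φ (coeff n (g ^ k)) * x ^ n) := by
        refine tsum_congr fun n => ?_
        have hvanish : ∀ k ∉ Finset.range (n + 1),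
            φ (coeff k f) * (φ (coeff n (g ^ k)) * x ^ n) = 0 := fun k hk => by
          rw [coeff_pow_eq_zero_of_lt hg (by simpa using hk), map_zero, zero_mul, mul_zero]
        rw [tsum_eq_sum hvanish, psComp, coeff_mk, map_sum, Finset.sum_mul]
        simp only [map_mul, mul_assoc]
    _ = ∑' (k : ℕ) (n : ℕ), φ (coeff k f) * (φ (coeff n (g ^ k)) * x ^ n) :=
        Summable.tsum_comm (f := fun k n => φ (coeff k f) * (φ (coeff n (g ^ k)) * x ^ n))
          (summable_psComp_terms hφ hx f hg)
    _ = psEval φ (psEval φ x g) f := by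
        refine tsum_congr fun k => ?_
        rw [tsum_mul_left, ← psEvalRingHom_apply hφ hx, ← map_pow]
        rfl

theorem norm_psEval_eq_of_psComp_eq [IsUltrametricDist K] (hφ : ∀ a, ‖φ a‖ ≤ 1)
    (hx : ‖x‖ < 1) {E π : R⟦X⟧} (hE : X ^ 2 ∣ E - 1 - X) (hπ0 : constantCoeff π = 0) {N : ℕ}
    (hπE : psComp π E = (1 + X) ^ N) :
    ‖psEval φ x π‖ = ‖(1 + x) ^ N - 1‖ := by
  set y := psEval φ x π
  have hy : ‖y‖ < 1 :=
    (pow_one ‖x‖ ▸ norm_psEval_le_pow hφ hx (pow_one (X : R⟦X⟧) ▸ X_dvd_iff.mpr hπ0)).trans_lt hx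
  have hcomp : (1 + x) ^ N = psEval φ y E := by
    rw [← psEval_psComp hφ hx E hπ0, hπE, ← psEvalRingHom_apply hφ hx, map_pow, map_add,
      map_one, psEvalRingHom_apply, psEval_X]
  have hrem : ‖(1 + x) ^ N - 1 - y‖ ≤ ‖y‖ ^ 2 := by
    have h := norm_psEval_le_pow hφ hy hE
    rwa [← psEvalRingHom_apply hφ hy, map_sub, map_sub, map_one, psEvalRingHom_apply,
      psEvalRingHom_apply, psEval_X, ← hcomp] at h
  exact (IsUltrametricDist.norm_eq_of_norm_sub_le_sq hy hrem).symm

end Evaluation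

section RootsOfUnity

variable {K : Type*} [NormedField K] [IsUltrametricDist K]

lemma norm_one_sub_pow_le {α : K} (hα : ‖α‖ ≤ 1) (j : ℕ) : ‖1 - α ^ j‖ ≤ ‖1 - α‖ := by
  rw [← mul_neg_geom_sum, norm_mul]
  refine mul_le_of_le_one_right (norm_nonneg _)
    (IsUltrametricDist.norm_sum_le_of_forall_le_of_nonneg zero_le_one fun i _ => ?_)
  rw [norm_pow]
  exact pow_le_one₀ (norm_nonneg _) hα

lemma IsPrimitiveRoot.norm_one_sub_eq {k : ℕ} (hk : k ≠ 0) {ζ μ : K}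
    (hζ : IsPrimitiveRoot ζ k) (hμ : IsPrimitiveRoot μ k) : ‖1 - μ‖ = ‖1 - ζ‖ := by
  have : NeZero k := ⟨hk⟩
  obtain ⟨i, -, rfl⟩ := hζ.eq_pow_of_pow_eq_one hμ.pow_eq_one
  obtain ⟨j, -, hj⟩ := hμ.eq_pow_of_pow_eq_one hζ.pow_eq_one
  have hζ1 : ‖ζ‖ = 1 := (hζ.isOfFinOrder hk).norm_eq_one
  refine le_antisymm (norm_one_sub_pow_le hζ1.le i) ?_
  conv_lhs => rw [← hj]
  exact norm_one_sub_pow_le (by rw [norm_pow, hζ1, one_pow]) j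

variable {p}

-- `p = Φ_{p^m}(1)` is the product of the `1 - μ` over the primitive `p^m`-th roots `μ`.
theorem IsPrimitiveRoot.norm_one_sub_pow_totient {m : ℕ} (hm : m ≠ 0) {ζ : K}
    (hζ : IsPrimitiveRoot ζ (p ^ m)) : ‖1 - ζ‖ ^ (p ^ m).totient = ‖(p : K)‖ := by
  have hpm : 0 < p ^ m := pow_pos (Fact.out : p.Prime).pos m
  have hprod : (p : K) = ∏ μ ∈ primitiveRoots (p ^ m) K, (1 - μ) := by
    have h := Polynomial.eval_one_cyclotomic_prime_pow (R := K) (p := p) (m - 1)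
    rw [Nat.sub_add_cancel (Nat.one_le_iff_ne_zero.mpr hm),
      Polynomial.cyclotomic_eq_prod_X_sub_primitiveRoots hζ, Polynomial.eval_prod] at h
    simpa using h.symm
  rw [hprod, norm_prod, Finset.prod_congr rfl fun μ hμ =>
    hζ.norm_one_sub_eq hpm.ne' ((mem_primitiveRoots hpm).mp hμ), Finset.prod_const,
    hζ.card_primitiveRoots]

theorem IsPrimitiveRoot.norm_sub_one_lt_one (hp : ‖(p : K)‖ < 1) {n : ℕ} {ζ : K}
    (hζ : IsPrimitiveRoot ζ (p ^ n)) : ‖ζ - 1‖ < 1 := by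
  rcases eq_or_ne n 0 with rfl | hn
  · rw [pow_zero, IsPrimitiveRoot.one_right_iff] at hζ
    simp [hζ]
  · rw [norm_sub_rev, ← pow_lt_one_iff_of_nonneg (norm_nonneg _)
      (Nat.totient_pos.mpr (pow_pos (Fact.out : p.Prime).pos n)).ne',
      hζ.norm_one_sub_pow_totient hn]
    exact hp

theorem IsPrimitiveRoot.norm_pow_prime_pow_sub_one {n i : ℕ} (hi : i < n) {ζ : K}
    (hζ : IsPrimitiveRoot ζ (p ^ n)) : ‖ζ ^ p ^ i - 1‖ = ‖ζ - 1‖ ^ p ^ i := by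
  have hp : p.Prime := Fact.out
  have hζi : IsPrimitiveRoot (ζ ^ p ^ i) (p ^ (n - i)) :=
    hζ.pow (pow_pos hp.pos n) (by rw [← pow_add, Nat.add_sub_cancel' hi.le])
  have htot : (p ^ n).totient = p ^ i * (p ^ (n - i)).totient := by
    rw [Nat.totient_prime_pow hp (by omega), Nat.totient_prime_pow hp (by omega), ← mul_assoc,
      ← pow_add]
    congr 2
    omega
  rw [norm_sub_rev, norm_sub_rev ζ]
  refine (pow_left_inj₀ (norm_nonneg _) (by positivity)
    (Nat.totient_pos.mpr (pow_pos hp.pos (n - i))).ne').mp ?_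
  rw [hζi.norm_one_sub_pow_totient (by omega), ← pow_mul, ← htot,
    hζ.norm_one_sub_pow_totient (by omega)]

end RootsOfUnity

lemma map_pow_of_map_mul {M Γ : Type*} [Monoid M] [AddMonoid Γ] {v : M → Γ}
    (hv : ∀ y z, v (y * z) = v y + v z) (y : M) {k : ℕ} (hk : k ≠ 0) : v (y ^ k) = k • v y := by
  obtain ⟨k, rfl⟩ := Nat.exists_eq_succ_of_ne_zero hk
  clear hk
  induction k with
  | zero => simp
  | succ k ih => rw [pow_succ, hv, ih, succ_nsmul _ (k + 1)]

lemma WithTop.nsmul_eq_coe_natCast_mul (k : ℕ) (a : WithTop ℚ) :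
    k • a = ((k : ℚ) : WithTop ℚ) * a := by
  induction a with
  | top =>
    rcases eq_or_ne k 0 with rfl | hk
    · simp
    · obtain ⟨k, rfl⟩ := Nat.exists_eq_succ_of_ne_zero hk
      rw [succ_nsmul, WithTop.add_top, WithTop.mul_top (by exact_mod_cast hk)]
  | coe q => rw [← WithTop.coe_nsmul, ← WithTop.coe_mul, nsmul_eq_mul]

section ArtinHasse

variable {p}

lemma IsArtinHasseZp.coeff_eq_one {Ep : ℤ_[p]⟦X⟧} (hEp : IsArtinHasseZp p Ep) {m : ℕ}
    (hm : m < 2) : coeff m Ep = 1 := by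
  have hAH : coeff m (artinHasse p) = 1 := by
    interval_cases m
    · simp [artinHasse, psComp, coeff_exp]
    · simp [artinHasse, psComp, Finset.sum_range_succ, coeff_exp, lseries, coeff_one]
      exact ⟨0, rfl⟩
  have h := congrArg (coeff m) hEp
  rw [coeff_map, coeff_map, hAH, map_one] at h
  exact PadicInt.ext h

lemma IsArtinHasseZp.X_sq_dvd_sub_one_sub_X {Ep : ℤ_[p]⟦X⟧} (hEp : IsArtinHasseZp p Ep) :
    X ^ 2 ∣ Ep - 1 - X :=
  X_pow_dvd_iff.mpr fun m hm => by
    rw [map_sub, map_sub, hEp.coeff_eq_one hm]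
    interval_cases m <;> simp [coeff_one]

end ArtinHasse

theorem statement4
    (Ep : PowerSeries ℤ_[p]) (hEp : IsArtinHasseZp p Ep)
    (πfam : ℕ → PowerSeries ℤ_[p]) (hπ : IsPiFamily p Ep πfam)
    (K : Type*) [NormedField K] [CompleteSpace K]
    [Algebra ℚ_[p] K]
    (hiso : ∀ y : ℚ_[p], ‖algebraMap ℚ_[p] K y‖ = ‖y‖)
    (v : K → WithTop ℚ)
    (hvmul : ∀ y z : K, v (y * z) = v y + v z)
    (hvnorm : ∀ y z : K, v y ≤ v z ↔ ‖z‖ ≤ ‖y‖)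
    (n : ℕ) (ζ : K) (hζ : IsPrimitiveRoot ζ (p ^ n)) :
    (∀ i : ℕ, Summable (fun j : ℕ =>
      algebraMap ℚ_[p] K (PadicInt.Coe.ringHom (PowerSeries.coeff j (πfam i)))
        * (ζ - 1) ^ j))
    ∧ (∀ i : ℕ, i < n →
        v (∑' j : ℕ,
            algebraMap ℚ_[p] K (PadicInt.Coe.ringHom (PowerSeries.coeff j (πfam i)))
              * (ζ - 1) ^ j)
          = (((p : ℚ) ^ i : ℚ) : WithTop ℚ) * v (ζ - 1))
    ∧ (∀ i : ℕ, n ≤ i →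
        (∑' j : ℕ,
            algebraMap ℚ_[p] K (PadicInt.Coe.ringHom (PowerSeries.coeff j (πfam i)))
              * (ζ - 1) ^ j) = 0) := by
  set φ := (algebraMap ℚ_[p] K).comp PadicInt.Coe.ringHom
  have hφ : ∀ a, ‖φ a‖ ≤ 1 := fun a => (hiso a).trans_le (PadicInt.norm_le_one a)
  -- The norm of `K` extends that of `ℚ_p`, so it is nonarchimedean.
  have : IsUltrametricDist K := .isUltrametricDist_of_forall_norm_natCast_le_one fun k => by
    rw [← map_natCast (algebraMap ℚ_[p] K), hiso]
    exact IsUltrametricDist.norm_natCast_le_one ℚ_[p] k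
  have hx : ‖ζ - 1‖ < 1 := hζ.norm_sub_one_lt_one <| by
    rw [← map_natCast (algebraMap ℚ_[p] K), hiso]
    exact Padic.norm_p_lt_one
  have hnorm (i : ℕ) : ‖psEval φ (ζ - 1) (πfam i)‖ = ‖ζ ^ p ^ i - 1‖ := by
    simpa using norm_psEval_eq_of_psComp_eq hφ hx hEp.X_sq_dvd_sub_one_sub_X (hπ i).1 (hπ i).2
  refine ⟨fun i => summable_coeff_mul_pow hφ hx (πfam i), fun i hi => ?_, fun i hi => ?_⟩
  · have hnorm' : ‖psEval φ (ζ - 1) (πfam i)‖ = ‖(ζ - 1) ^ p ^ i‖ := by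
      rw [hnorm, hζ.norm_pow_prime_pow_sub_one hi, norm_pow]
    change v (psEval φ (ζ - 1) (πfam i)) = _
    rw [le_antisymm ((hvnorm _ _).mpr hnorm'.ge) ((hvnorm _ _).mpr hnorm'.le),
      map_pow_of_map_mul hvmul _ (pow_ne_zero i (Fact.out : p.Prime).ne_zero),
      WithTop.nsmul_eq_coe_natCast_mul, Nat.cast_pow]
  · have hζi : ζ ^ p ^ i = 1 := (hζ.pow_eq_one_iff_dvd _).mpr (pow_dvd_pow p hi)
    rw [← norm_eq_zero]
    change ‖psEval φ (ζ - 1) (πfam i)‖ = 0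
    rw [hnorm, hζi, sub_self, norm_zero]
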